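/- arXiv:0908.3302 — 4 statements merged into one kernel-verified Lean document; each statement's English description precedes it below -/
import Mathlib

section
/- Let s_i be a simple root of a reduced root system R whose simple system S is a basis of V, and let R^i = {w s_i : w ∈ W} be its orbit under the reflection group W. Then s_i is the only simple root lying in R^i if and only if for every ε > 0 the following set equality holds: ⋃_{w ∈ W} {x ∈ w C̄ : 0 ≤ ⟨w s_i, x⟩ ≤ ε} = ⋃_{α ∈ R^i ∩ R_+} {x ∈ V : |⟨α, x⟩| ≤ ε}. -/
/-!
Fix `δ` with `⟪s k, δ⟫ = 1` for all `k`. Reflecting a non-simple positive root `β` by a simple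
reflection `σ_j` with `⟪s j, β⟫ > 0` keeps it positive, lowers `⟪β, δ⟫` and only decreases its
coefficients, so the descent ends at a simple root of the `W`-orbit of `β`. Hence if `s i` is the
only simple root of its orbit, every positive `β ∈ Rⁱ` is `s i` plus a nonnegative combination of
simple roots, and `⟪s i, y⟫ ≤ ⟪β, y⟫` on `C̄`. As every point is `W`-conjugate into `C̄` (take `w`
maximizing `⟪w δ, x⟫` over the finite group `W`), each slab `|⟪α, x⟫| ≤ ε` is covered by the
translated chamber slabs; the reverse inclusion holds because `± w (s i) ∈ Rⁱ`.

Conversely, if `s j ∈ Rⁱ` with `j ≠ i`, a point of `C̄` on the wall of `s j` alone and far from the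
other walls lies in the slab of `s j`, but in no translated chamber slab: `C̄` is a fundamental
domain for `W`, which is generated by the simple reflections and satisfies the deletion condition.
-/

open scoped RealInnerProductSpace

noncomputable def rootReflection {V : Type*} [NormedAddCommGroup V]
    [InnerProductSpace ℝ V] (α : V) (v : V) : V :=
  v - (2 * ⟪α, v⟫ / ⟪α, α⟫) • α

section Reflection

variable {V : Type*} [NormedAddCommGroup V] [InnerProductSpace ℝ V]

noncomputable def reflectionIsometry (α : V) : V ≃ₗᵢ[ℝ] V :=
  (ℝ ∙ α)ᗮ.reflection

lemma reflectionIsometry_apply (α v : V) : reflectionIsometry α v = rootReflection α v := by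
  rw [reflectionIsometry, Submodule.reflection_orthogonal_apply,
    Submodule.reflection_singleton_apply, rootReflection, real_inner_self_eq_norm_sq]
  simp only [RCLike.ofReal_real_eq_id, id_eq]
  module

lemma reflectionIsometry_self (α : V) : reflectionIsometry α α = -α :=
  Submodule.reflection_orthogonalComplement_singleton_eq_neg α

lemma reflectionIsometry_reflectionIsometry (α v : V) :
    reflectionIsometry α (reflectionIsometry α v) = v :=
  Submodule.reflection_reflection _ v

lemma reflectionIsometry_inv (α : V) : (reflectionIsometry α)⁻¹ = reflectionIsometry α :=
  Submodule.reflection_inv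

lemma reflectionIsometry_mul_self (α : V) : reflectionIsometry α * reflectionIsometry α = 1 :=
  Submodule.reflection_mul_reflection _

lemma reflectionIsometry_apply_of_inner_eq_zero {α v : V} (h : ⟪α, v⟫ = 0) :
    reflectionIsometry α v = v := by
  simp [reflectionIsometry_apply, rootReflection, h]

lemma reflectionIsometry_map (g : V ≃ₗᵢ[ℝ] V) (α : V) :
    reflectionIsometry (g α) = g * reflectionIsometry α * g⁻¹ := by
  ext v
  have hv : ⟪α, g.symm v⟫ = ⟪g α, v⟫ := by
    rw [← g.inner_map_map, g.apply_symm_apply]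
  simp only [LinearIsometryEquiv.coe_mul, Function.comp_apply, reflectionIsometry_apply,
    rootReflection, map_sub, map_smul, g.inner_map_map, hv, LinearIsometryEquiv.coe_inv,
    g.apply_symm_apply]

end Reflection

namespace Module.Basis

variable {V : Type*} [NormedAddCommGroup V] [InnerProductSpace ℝ V] {ι : Type*}
  (b : Basis ι ℝ V)

lemma repr_reflectionIsometry (a : ι) (v : V) :
    b.repr (reflectionIsometry (b a) v) =
      b.repr v - (2 * ⟪b a, v⟫ / ⟪b a, b a⟫) • Finsupp.single a 1 := by
  rw [reflectionIsometry_apply, rootReflection, map_sub, map_smul, b.repr_self]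

variable [Fintype ι]

lemma exists_inner_eq (f : ι → ℝ) : ∃ δ : V, ∀ k, ⟪b k, δ⟫ = f k := by
  have := Module.Finite.of_basis b
  refine ⟨(InnerProductSpace.toDual ℝ V).symm (LinearMap.toContinuousLinearMap (b.constr ℝ f)),
    fun k => ?_⟩
  rw [real_inner_comm, InnerProductSpace.toDual_symm_apply, LinearMap.coe_toContinuousLinearMap',
    b.constr_basis]

lemma inner_eq_sum_repr (β x : V) : ⟪β, x⟫ = ∑ k, b.repr β k * ⟪b k, x⟫ := by
  conv_lhs => rw [← b.sum_repr β]
  simp only [sum_inner, real_inner_smul_left]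

lemma inner_nonneg_of_repr_nonneg {β x : V} (hβ : ∀ k, 0 ≤ b.repr β k)
    (hx : ∀ k, 0 ≤ ⟪b k, x⟫) : 0 ≤ ⟪β, x⟫ := by
  rw [b.inner_eq_sum_repr]
  exact Finset.sum_nonneg fun k _ => mul_nonneg (hβ k) (hx k)

lemma exists_inner_pos_of_repr_nonneg {β : V} (hβ0 : β ≠ 0) (hβ : ∀ k, 0 ≤ b.repr β k) :
    ∃ k, 0 < ⟪b k, β⟫ := by
  by_contra! h
  have : ⟪β, β⟫ ≤ 0 := by
    rw [b.inner_eq_sum_repr]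
    exact Finset.sum_nonpos fun k _ => mul_nonpos_of_nonneg_of_nonpos (hβ k) (h k)
  exact hβ0 (real_inner_self_nonpos.1 this)

end Module.Basis

structure SimpleRootSystem (V : Type*) [NormedAddCommGroup V] [InnerProductSpace ℝ V] (n : ℕ) where
  R : Finset V
  zero_notMem : (0 : V) ∉ R
  image_rootReflection : ∀ α ∈ R, rootReflection α '' (R : Set V) = (R : Set V)
  reduced : ∀ α ∈ R, {x : V | ∃ c : ℝ, x = c • α} ∩ (R : Set V) = {α, -α}
  s : Module.Basis (Fin n) ℝ V
  s_mem : ∀ j, s j ∈ R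
  nonneg_or_nonpos : ∀ α ∈ R, (∀ j, 0 ≤ s.repr α j) ∨ (∀ j, s.repr α j ≤ 0)

namespace SimpleRootSystem

variable {V : Type*} [NormedAddCommGroup V] [InnerProductSpace ℝ V] {n : ℕ}
  (P : SimpleRootSystem V n)

def W : Subgroup (V ≃ₗᵢ[ℝ] V) :=
  Subgroup.closure {g | ∃ α ∈ P.R, ∀ v, g v = rootReflection α v}

def chamber : Set V := {x | ∀ j, 0 ≤ ⟪P.s j, x⟫}

def posRoots : Set V := {α | α ∈ P.R ∧ ∀ j, 0 ≤ P.s.repr α j}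

def orbit (i : Fin n) : Set V := {x | ∃ w ∈ P.W, x = w (P.s i)}

variable {P}

lemma ne_zero_of_mem {α : V} (hα : α ∈ P.R) : α ≠ 0 :=
  fun h => P.zero_notMem (h ▸ hα)

lemma reflectionIsometry_mem_W {α : V} (hα : α ∈ P.R) : reflectionIsometry α ∈ P.W :=
  Subgroup.subset_closure ⟨α, hα, reflectionIsometry_apply α⟩

lemma image_eq_of_mem_W {w : V ≃ₗᵢ[ℝ] V} (hw : w ∈ P.W) : ⇑w '' (P.R : Set V) = P.R := by
  induction hw using Subgroup.closure_induction with
  | mem g hg =>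
    obtain ⟨α, hα, hgα⟩ := hg
    rw [show ⇑g = rootReflection α from funext hgα]
    exact P.image_rootReflection α hα
  | one => rw [LinearIsometryEquiv.coe_one, Set.image_id]
  | mul x y _ _ hx hy => rw [LinearIsometryEquiv.coe_mul, Set.image_comp, hy, hx]
  | inv x _ hx => rw [LinearIsometryEquiv.coe_inv, ← hx, ← Set.image_comp, x.symm_comp_self,
      Set.image_id, hx]

lemma apply_mem_of_mem_W {w : V ≃ₗᵢ[ℝ] V} (hw : w ∈ P.W) {α : V} (hα : α ∈ P.R) : w α ∈ P.R :=
  (image_eq_of_mem_W hw).subset (Set.mem_image_of_mem w hα)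

lemma W_finite : (P.W : Set (V ≃ₗᵢ[ℝ] V)).Finite := by
  refine Set.Finite.of_injOn (f := fun w j => w (P.s j)) (t := Set.univ.pi fun _ => P.R)
    (fun w hw j _ => apply_mem_of_mem_W hw (P.s_mem j)) (fun w _ w' _ h => ?_)
    (Set.Finite.pi fun _ => P.R.finite_toSet)
  exact LinearIsometryEquiv.toLinearEquiv_injective (P.s.ext' (congrFun h))

lemma neg_mem {α : V} (hα : α ∈ P.R) : -α ∈ P.R := by
  rw [← reflectionIsometry_self]
  exact apply_mem_of_mem_W (reflectionIsometry_mem_W hα) hα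

lemma s_mem_posRoots (j : Fin n) : P.s j ∈ P.posRoots := by
  refine ⟨P.s_mem j, fun k => ?_⟩
  rw [P.s.repr_self, Finsupp.single_apply]
  split_ifs <;> norm_num

lemma mem_posRoots_or_neg_mem {α : V} (hα : α ∈ P.R) : α ∈ P.posRoots ∨ -α ∈ P.posRoots := by
  refine (P.nonneg_or_nonpos α hα).imp (fun h => ⟨hα, h⟩) (fun h => ⟨neg_mem hα, fun k => ?_⟩)
  rw [map_neg, Finsupp.neg_apply, neg_nonneg]
  exact h k

lemma notMem_posRoots_of_neg_mem {α : V} (hα : α ∈ P.R) (hneg : -α ∈ P.posRoots) :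
    α ∉ P.posRoots := by
  refine fun hpos => ne_zero_of_mem hα (P.s.repr.map_eq_zero_iff.1 (Finsupp.ext fun k => ?_))
  have := hneg.2 k
  rw [map_neg, Finsupp.neg_apply, neg_nonneg] at this
  exact le_antisymm this (hpos.2 k)

lemma reflectionIsometry_apply_mem_posRoots {β : V} (hβ : β ∈ P.posRoots) {a : Fin n}
    (hne : β ≠ P.s a) : reflectionIsometry (P.s a) β ∈ P.posRoots := by
  have hβ' := apply_mem_of_mem_W (reflectionIsometry_mem_W (P.s_mem a)) hβ.1
  refine (P.nonneg_or_nonpos _ hβ').elim (fun h => ⟨hβ', h⟩) fun h => absurd ?_ hne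
  have hrepr : P.s.repr β = Finsupp.single a (P.s.repr β a) := by
    ext k
    rcases eq_or_ne k a with rfl | hk
    · simp
    have := h k
    rw [P.s.repr_reflectionIsometry, Finsupp.sub_apply, Finsupp.smul_apply,
      Finsupp.single_eq_of_ne hk, smul_zero, sub_zero] at this
    rw [Finsupp.single_eq_of_ne hk]
    exact le_antisymm this (hβ.2 k)
  have hβa : β = P.s.repr β a • P.s a := by
    rw [← P.s.repr_symm_single, ← hrepr, LinearEquiv.symm_apply_apply]
  have : β ∈ ({P.s a, -P.s a} : Set V) := P.reduced _ (P.s_mem a) ▸ ⟨⟨_, hβa⟩, hβ.1⟩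
  rcases this with h | h
  · exact h
  · exact absurd (h ▸ hβ) (notMem_posRoots_of_neg_mem (neg_mem (P.s_mem a)) (by
      rw [neg_neg]; exact s_mem_posRoots a))

lemma exists_apply_mem_chamber_eq (x : V) : ∃ w ∈ P.W, ∃ y ∈ P.chamber, w y = x := by
  obtain ⟨δ, hδ⟩ := P.s.exists_inner_eq fun _ => (1 : ℝ)
  -- comparing a maximizer `w` of `⟪w δ, x⟫` with `w * σ_k` forces `⟪w (P.s k), x⟫ ≥ 0`
  obtain ⟨w, hw, hmax⟩ := Set.exists_max_image _ (fun w : V ≃ₗᵢ[ℝ] V => ⟪w δ, x⟫) W_finite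
    ⟨1, P.W.one_mem⟩
  refine ⟨w, hw, w.symm x, fun k => ?_, w.apply_symm_apply x⟩
  have hsk := real_inner_self_pos.2 (ne_zero_of_mem (P.s_mem k))
  have hle := hmax _ (mul_mem hw (reflectionIsometry_mem_W (P.s_mem k)))
  rw [LinearIsometryEquiv.coe_mul, Function.comp_apply, reflectionIsometry_apply, rootReflection,
    map_sub, map_smul, inner_sub_left, real_inner_smul_left, hδ k] at hle
  rw [← w.inner_map_map, w.apply_symm_apply]
  have hc : 0 < 2 * 1 / ⟪P.s k, P.s k⟫ := by positivity
  nlinarith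

noncomputable def wordProd (l : List (Fin n)) : V ≃ₗᵢ[ℝ] V :=
  (l.map fun j => reflectionIsometry (P.s j)).prod

variable (P) in
@[simp]
lemma wordProd_nil : P.wordProd [] = 1 := rfl

variable (P) in
@[simp]
lemma wordProd_cons (j : Fin n) (l : List (Fin n)) :
    P.wordProd (j :: l) = reflectionIsometry (P.s j) * P.wordProd l := by
  simp [wordProd]

variable (P) in
lemma wordProd_cons_apply (j : Fin n) (l : List (Fin n)) (v : V) :
    P.wordProd (j :: l) v = reflectionIsometry (P.s j) (P.wordProd l v) := by
  rw [wordProd_cons]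
  rfl

variable (P) in
@[simp]
lemma wordProd_append (l l' : List (Fin n)) :
    P.wordProd (l ++ l') = P.wordProd l * P.wordProd l' := by
  simp [wordProd]

variable (P) in
lemma wordProd_reverse (l : List (Fin n)) : P.wordProd l.reverse = (P.wordProd l)⁻¹ := by
  simp [wordProd, List.prod_inv_reverse, reflectionIsometry_inv, Function.comp_def]

variable (P) in
lemma wordProd_mem_W (l : List (Fin n)) : P.wordProd l ∈ P.W := by
  induction l with
  | nil => exact P.W.one_mem
  | cons j l ih => exact P.wordProd_cons j l ▸ mul_mem (reflectionIsometry_mem_W (P.s_mem j)) ih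

lemma exists_wordProd_apply_eq_of_mem_posRoots {β : V} (hβ : β ∈ P.posRoots) :
    ∃ l k, P.wordProd l (P.s k) = β ∧ ∀ m, P.s.repr (P.s k) m ≤ P.s.repr β m := by
  obtain ⟨δ, hδ⟩ := P.s.exists_inner_eq fun _ => (1 : ℝ)
  have hwf : P.posRoots.WellFoundedOn (Function.onFun (· < ·) fun γ => ⟪γ, δ⟫) :=
    Set.wellFoundedOn_image.1 ((P.R.finite_toSet.subset fun _ h => h.1).image _).wellFoundedOn
  refine hwf.induction hβ (P := fun β => ∃ l k, P.wordProd l (P.s k) = β ∧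
    ∀ m, P.s.repr (P.s k) m ≤ P.s.repr β m) fun β hβ ih => ?_
  by_cases hsimple : ∃ k, P.s k = β
  · obtain ⟨k, rfl⟩ := hsimple
    exact ⟨[], k, rfl, fun _ => le_rfl⟩
  push Not at hsimple
  obtain ⟨j, hj⟩ := P.s.exists_inner_pos_of_repr_nonneg (ne_zero_of_mem hβ.1) hβ.2
  have hc : 0 < 2 * ⟪P.s j, β⟫ / ⟪P.s j, P.s j⟫ :=
    have := real_inner_self_pos.2 (ne_zero_of_mem (P.s_mem j))
    by positivity
  have hlt : ⟪reflectionIsometry (P.s j) β, δ⟫ < ⟪β, δ⟫ := by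
    rw [reflectionIsometry_apply, rootReflection, inner_sub_left, real_inner_smul_left, hδ j]
    linarith
  obtain ⟨l, k, hlk, hle⟩ :=
    ih _ (reflectionIsometry_apply_mem_posRoots hβ (hsimple j).symm) hlt
  refine ⟨j :: l, k, ?_, fun m => (hle m).trans ?_⟩
  · rw [wordProd_cons, LinearIsometryEquiv.coe_mul, Function.comp_apply, hlk,
      reflectionIsometry_reflectionIsometry]
  · rw [P.s.repr_reflectionIsometry, Finsupp.sub_apply, Finsupp.smul_apply, smul_eq_mul,
      sub_le_self_iff]
    exact mul_nonneg hc.le (by rw [Finsupp.single_apply]; split_ifs <;> norm_num)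

lemma exists_wordProd_apply_eq {β : V} (hβ : β ∈ P.R) : ∃ l k, P.wordProd l (P.s k) = β := by
  rcases mem_posRoots_or_neg_mem hβ with hpos | hneg
  · obtain ⟨l, k, hlk, -⟩ := exists_wordProd_apply_eq_of_mem_posRoots hpos
    exact ⟨l, k, hlk⟩
  · obtain ⟨l, k, hlk, -⟩ := exists_wordProd_apply_eq_of_mem_posRoots hneg
    refine ⟨l ++ [k], k, ?_⟩
    rw [wordProd_append, LinearIsometryEquiv.coe_mul, Function.comp_apply, wordProd_cons,
      wordProd_nil, mul_one, reflectionIsometry_self, map_neg, hlk, neg_neg]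

lemma exists_wordProd_eq {w : V ≃ₗᵢ[ℝ] V} (hw : w ∈ P.W) : ∃ l, P.wordProd l = w := by
  induction hw using Subgroup.closure_induction with
  | mem g hg =>
    obtain ⟨α, hα, hgα⟩ := hg
    obtain ⟨l, k, rfl⟩ := exists_wordProd_apply_eq hα
    refine ⟨l ++ [k] ++ l.reverse, ?_⟩
    ext v
    rw [hgα, ← reflectionIsometry_apply, reflectionIsometry_map, wordProd_append, wordProd_append,
      wordProd_reverse, wordProd_cons, wordProd_nil, mul_one]
  | one => exact ⟨[], rfl⟩
  | mul x y _ _ hx hy =>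
    obtain ⟨l, rfl⟩ := hx
    obtain ⟨l', rfl⟩ := hy
    exact ⟨l ++ l', P.wordProd_append l l'⟩
  | inv x _ hx =>
    obtain ⟨l, rfl⟩ := hx
    exact ⟨l.reverse, P.wordProd_reverse l⟩

lemma exists_wordProd_eq_mul_of_neg_mem_posRoots {j : Fin n} :
    ∀ l : List (Fin n), -P.wordProd l (P.s j) ∈ P.posRoots →
      ∃ l', l'.length < l.length ∧ P.wordProd l' = P.wordProd l * reflectionIsometry (P.s j)
  | [], h => absurd (s_mem_posRoots j) (notMem_posRoots_of_neg_mem (P.s_mem j) h)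
  | a :: t, h => by
    rcases mem_posRoots_or_neg_mem (apply_mem_of_mem_W (P.wordProd_mem_W t) (P.s_mem j))
      with hpos | hneg
    · have hγa : P.wordProd t (P.s j) = P.s a := by
        by_contra hne
        rw [wordProd_cons_apply] at h
        exact notMem_posRoots_of_neg_mem
          (apply_mem_of_mem_W (reflectionIsometry_mem_W (P.s_mem a)) hpos.1) h
          (reflectionIsometry_apply_mem_posRoots hpos hne)
      refine ⟨t, by simp, ?_⟩
      rw [wordProd_cons, ← hγa, reflectionIsometry_map, inv_mul_cancel_right, mul_assoc,
        reflectionIsometry_mul_self, mul_one]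
    · obtain ⟨t', ht', heq⟩ := exists_wordProd_eq_mul_of_neg_mem_posRoots t hneg
      exact ⟨a :: t', by simpa, by rw [wordProd_cons, wordProd_cons, heq, mul_assoc]⟩

lemma wordProd_apply_eq_self_of_mem_chamber {y : V} (hy : y ∈ P.chamber) (l : List (Fin n))
    (hl : P.wordProd l y ∈ P.chamber) : P.wordProd l y = y := by
  rcases l.eq_nil_or_concat with rfl | ⟨u, j, rfl⟩
  · rfl
  rw [List.concat_eq_append] at hl ⊢
  rcases mem_posRoots_or_neg_mem (apply_mem_of_mem_W (P.wordProd_mem_W u) (P.s_mem j))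
    with hpos | hneg
  · have hsj : P.wordProd (u ++ [j]) (P.s j) = -P.wordProd u (P.s j) := by
      simp [LinearIsometryEquiv.coe_mul, reflectionIsometry_self]
    -- `w (P.s j)` is negative while `w y` is dominant
    have hwall : ⟪P.s j, y⟫ = 0 := by
      refine le_antisymm ?_ (hy j)
      rw [← (P.wordProd (u ++ [j])).inner_map_map, hsj, inner_neg_left, neg_nonpos]
      exact P.s.inner_nonneg_of_repr_nonneg hpos.2 hl
    have hu : P.wordProd (u ++ [j]) y = P.wordProd u y := by
      simp [LinearIsometryEquiv.coe_mul, reflectionIsometry_apply_of_inner_eq_zero hwall]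
    rw [hu] at hl ⊢
    exact wordProd_apply_eq_self_of_mem_chamber hy u hl
  · obtain ⟨u', hu', heq⟩ := exists_wordProd_eq_mul_of_neg_mem_posRoots u hneg
    have hu : P.wordProd (u ++ [j]) = P.wordProd u' := by simp [heq]
    rw [hu] at hl ⊢
    exact wordProd_apply_eq_self_of_mem_chamber hy u' hl
termination_by l.length
decreasing_by all_goals subst_vars; simp only [List.length_concat]; omega

lemma apply_eq_self_of_mem_chamber {w : V ≃ₗᵢ[ℝ] V} (hw : w ∈ P.W) {y : V} (hy : y ∈ P.chamber)
    (hwy : w y ∈ P.chamber) : w y = y := by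
  obtain ⟨l, rfl⟩ := exists_wordProd_eq hw
  exact wordProd_apply_eq_self_of_mem_chamber hy l hwy

lemma mem_R_of_mem_orbit {i : Fin n} {β : V} (hβ : β ∈ P.orbit i) : β ∈ P.R := by
  obtain ⟨w, hw, rfl⟩ := hβ
  exact apply_mem_of_mem_W hw (P.s_mem i)

lemma apply_mem_orbit {i : Fin n} {β : V} (hβ : β ∈ P.orbit i) {w : V ≃ₗᵢ[ℝ] V} (hw : w ∈ P.W) :
    w β ∈ P.orbit i := by
  obtain ⟨u, hu, rfl⟩ := hβ
  exact ⟨w * u, mul_mem hw hu, rfl⟩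

lemma neg_mem_orbit {i : Fin n} {β : V} (hβ : β ∈ P.orbit i) : -β ∈ P.orbit i :=
  reflectionIsometry_self β ▸ apply_mem_orbit hβ (reflectionIsometry_mem_W (mem_R_of_mem_orbit hβ))

lemma inner_s_le_of_mem_orbit {i : Fin n} (halone : ∀ j, P.s j ∈ P.orbit i → j = i) {β : V}
    (hβ : β ∈ P.orbit i) (hβpos : β ∈ P.posRoots) {y : V} (hy : y ∈ P.chamber) :
    ⟪P.s i, y⟫ ≤ ⟪β, y⟫ := by
  obtain ⟨l, k, hlk, hle⟩ := exists_wordProd_apply_eq_of_mem_posRoots hβpos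
  have hk : P.s k ∈ P.orbit i := by
    simpa [← hlk] using apply_mem_orbit hβ (inv_mem (P.wordProd_mem_W l))
  obtain rfl := halone k hk
  rw [← sub_nonneg, ← inner_sub_left]
  refine P.s.inner_nonneg_of_repr_nonneg (fun m => ?_) hy
  rw [map_sub, Finsupp.sub_apply, sub_nonneg]
  exact hle m

theorem iUnion_eq_of_forall_mem_orbit {i : Fin n} (halone : ∀ j, P.s j ∈ P.orbit i → j = i)
    (ε : ℝ) :
    (⋃ w ∈ P.W, {x : V | x ∈ (w : V ≃ₗᵢ[ℝ] V) '' P.chamber ∧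
        0 ≤ ⟪(w : V ≃ₗᵢ[ℝ] V) (P.s i), x⟫ ∧ ⟪(w : V ≃ₗᵢ[ℝ] V) (P.s i), x⟫ ≤ ε}) =
      ⋃ α ∈ P.orbit i ∩ P.posRoots, {x : V | |⟪α, x⟫| ≤ ε} := by
  ext x
  simp only [Set.mem_iUnion, Set.mem_ofPred_eq, exists_prop, Set.mem_inter_iff]
  constructor
  · rintro ⟨w, hw, -, h0, hε⟩
    have hα : w (P.s i) ∈ P.orbit i := ⟨w, hw, rfl⟩
    rcases mem_posRoots_or_neg_mem (mem_R_of_mem_orbit hα) with hpos | hneg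
    · exact ⟨_, ⟨hα, hpos⟩, by rwa [abs_of_nonneg h0]⟩
    · exact ⟨_, ⟨neg_mem_orbit hα, hneg⟩, by rwa [inner_neg_left, abs_neg, abs_of_nonneg h0]⟩
  · rintro ⟨α, ⟨hα, -⟩, hαx⟩
    obtain ⟨w, hw, y, hy, rfl⟩ := exists_apply_mem_chamber_eq x
    have hγ : w⁻¹ α ∈ P.orbit i := apply_mem_orbit hα (inv_mem hw)
    have hγy : |⟪w⁻¹ α, y⟫| ≤ ε := by
      rwa [← w.inner_map_map, LinearIsometryEquiv.coe_inv, w.apply_symm_apply]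
    obtain ⟨β, hβ, hβpos, hβy⟩ : ∃ β ∈ P.orbit i, β ∈ P.posRoots ∧ ⟪β, y⟫ ≤ ε := by
      rcases mem_posRoots_or_neg_mem (mem_R_of_mem_orbit hγ) with hpos | hneg
      · exact ⟨_, hγ, hpos, (le_abs_self _).trans hγy⟩
      · exact ⟨_, neg_mem_orbit hγ, hneg, by rw [inner_neg_left]; exact (neg_le_abs _).trans hγy⟩
    refine ⟨w, hw, ⟨y, hy, rfl⟩, ?_⟩
    rw [w.inner_map_map]
    exact ⟨hy i, (inner_s_le_of_mem_orbit halone hβ hβpos hy).trans hβy⟩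

theorem eq_of_mem_orbit_of_subset_iUnion {i j : Fin n} (hj : P.s j ∈ P.orbit i) {ε : ℝ}
    (hε : 0 < ε)
    (hsub : ⋃ α ∈ P.orbit i ∩ P.posRoots, {x : V | |⟪α, x⟫| ≤ ε} ⊆
      ⋃ w ∈ P.W, {x : V | x ∈ (w : V ≃ₗᵢ[ℝ] V) '' P.chamber ∧
        0 ≤ ⟪(w : V ≃ₗᵢ[ℝ] V) (P.s i), x⟫ ∧ ⟪(w : V ≃ₗᵢ[ℝ] V) (P.s i), x⟫ ≤ ε}) :
    j = i := by
  by_contra hji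
  -- `x ∈ C̄` lies on the wall of `P.s j` only, while `⟪P.s i, x⟫ = 2 ε`
  obtain ⟨x, hx⟩ := P.s.exists_inner_eq fun k => if k = j then 0 else 2 * ε
  have hxC : x ∈ P.chamber := fun k => by rw [hx]; split_ifs <;> positivity
  have hxR : x ∈ ⋃ α ∈ P.orbit i ∩ P.posRoots, {x : V | |⟪α, x⟫| ≤ ε} :=
    Set.mem_biUnion ⟨hj, s_mem_posRoots j⟩ (by simp [hx, hε.le])
  obtain ⟨w, hw, ⟨y, hy, rfl⟩, -, hle⟩ := Set.mem_iUnion₂.1 (hsub hxR)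
  rw [w.inner_map_map, ← apply_eq_self_of_mem_chamber hw hy hxC, hx, if_neg (Ne.symm hji)] at hle
  linarith

end SimpleRootSystem

/-- Let `R` be a reduced root system in `V` whose simple system
`s : Fin n → V` is a basis of `V`, with reflection group `W` (the subgroup of the
isometry group of `V` generated by the reflections `σ_α`, `α ∈ R`), positive system
`R₊`, closed Weyl chamber `C̄ = {x | ∀ j, ⟪s j, x⟫ ≥ 0}` and orbit
`Rⁱ = {w (s i) | w ∈ W}` of a simple root `s i`.  Then `s i` is the only simple root
lying in `Rⁱ` if and only if for every `ε > 0`,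
`⋃_{w ∈ W} {x ∈ w C̄ : 0 ≤ ⟪w (s i), x⟫ ≤ ε} = ⋃_{α ∈ Rⁱ ∩ R₊} {x : |⟪α, x⟫| ≤ ε}`. -/
theorem simple_root_alone_in_orbit_iff {V : Type*} [NormedAddCommGroup V]
    [InnerProductSpace ℝ V] {n : ℕ}
    (R : Finset V) (hR0 : (0 : V) ∉ R)
    (hRrefl : ∀ α ∈ R, rootReflection α '' (R : Set V) = (R : Set V))
    (hRred : ∀ α ∈ R, {x : V | ∃ c : ℝ, x = c • α} ∩ (R : Set V) = {α, -α})
    (s : Module.Basis (Fin n) ℝ V) (hsR : ∀ j, s j ∈ R)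
    (hsimple : ∀ α ∈ R, (∀ j, 0 ≤ s.repr α j) ∨ (∀ j, s.repr α j ≤ 0))
    (W : Subgroup (V ≃ₗᵢ[ℝ] V))
    (hW : W = Subgroup.closure {g : V ≃ₗᵢ[ℝ] V | ∃ α ∈ R, ∀ v, g v = rootReflection α v})
    (C : Set V) (hC : C = {x : V | ∀ j, 0 ≤ ⟪s j, x⟫})
    (Rplus : Set V) (hRplus : Rplus = {α : V | α ∈ R ∧ ∀ j, 0 ≤ s.repr α j})
    (i : Fin n)
    (Ri : Set V) (hRi : Ri = {x : V | ∃ w ∈ W, x = w (s i)}) :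
    (∀ j : Fin n, s j ∈ Ri → j = i) ↔
      ∀ ε : ℝ, 0 < ε →
        (⋃ w ∈ W, {x : V | x ∈ (w : V ≃ₗᵢ[ℝ] V) '' C ∧
            0 ≤ ⟪(w : V ≃ₗᵢ[ℝ] V) (s i), x⟫ ∧ ⟪(w : V ≃ₗᵢ[ℝ] V) (s i), x⟫ ≤ ε}) =
        ⋃ α ∈ Ri ∩ Rplus, {x : V | |⟪α, x⟫| ≤ ε} := by
  subst hW hC hRplus hRi
  let P : SimpleRootSystem V n := ⟨R, hR0, hRrefl, hRred, s, hsR, hsimple⟩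
  exact ⟨fun halone ε _ => P.iUnion_eq_of_forall_mem_orbit halone ε,
    fun h _ hj => P.eq_of_mem_orbit_of_subset_iUnion hj one_pos (h 1 one_pos).ge⟩
end

section
/- Let s_i be a simple root of a reduced root system R whose simple system S is a basis of V, with reflection group W and closed Weyl chamber C̄. Then for every ε > 0 the following set equality holds: ⋃_{w ∈ W} {x ∈ w C̄ : 0 ≤ ⟨w s_i, x⟩ ≤ ε} = ⋃_{w ∈ W} {x ∈ w(C̄ ∪ σ_{s_i}(C̄)) : −ε ≤ ⟨w s_i, x⟩ ≤ ε}. -/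
/-!
The half `w σ C̄` of a doubled chamber `w (C̄ ∪ σ C̄)`, where `σ = σ_{s_i} ∈ W`, is itself a
chamber, and since `(w σ) s_i = -w s_i` its slab `-ε ≤ ⟨w s_i, x⟩ ≤ 0` is the slab
`0 ≤ ⟨(w σ) s_i, x⟩ ≤ ε` of that chamber. On the half `w C̄` the inequality
`0 ≤ ⟨w s_i, x⟩` holds automatically because `s_i` is one of the walls of `C̄`.
-/

open scoped RealInnerProductSpace

section RootReflection

variable {V : Type*} [NormedAddCommGroup V] [InnerProductSpace ℝ V]

theorem rootReflection_involutive {α : V} (hα : ⟪α, α⟫ ≠ 0) :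
    Function.Involutive (rootReflection α) := by
  intro v
  simp only [rootReflection, inner_sub_right, real_inner_smul_right]
  rw [sub_sub, ← add_smul]
  have : 2 * ⟪α, v⟫ / ⟪α, α⟫ + 2 * (⟪α, v⟫ - 2 * ⟪α, v⟫ / ⟪α, α⟫ * ⟪α, α⟫) / ⟪α, α⟫ = 0 := by
    field_simp
    ring
  rw [this, zero_smul, sub_zero]

theorem rootReflection_self {α : V} (hα : ⟪α, α⟫ ≠ 0) : rootReflection α α = -α := by
  simp only [rootReflection, mul_div_assoc, div_self hα, mul_one, two_smul]
  abel

theorem inner_rootReflection_rootReflection {α : V} (hα : ⟪α, α⟫ ≠ 0) (x y : V) :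
    ⟪rootReflection α x, rootReflection α y⟫ = ⟪x, y⟫ := by
  simp only [rootReflection, inner_sub_left, inner_sub_right, real_inner_smul_left,
    real_inner_smul_right, real_inner_comm x α]
  field_simp
  ring

/-- The reflection `σ_α` in the hyperplane orthogonal to `α`:
`σ_α (v) = v - 2 (⟪α, v⟫ / ⟪α, α⟫) • α`. -/
noncomputable def rootReflectionLinearMap (α : V) : V →ₗ[ℝ] V where
  toFun := rootReflection α
  map_add' u v := by
    simp only [rootReflection, inner_add_right, mul_add, add_div, add_smul]
    abel
  map_smul' r v := by
    simp only [rootReflection, real_inner_smul_right, RingHom.id_apply, smul_sub, smul_smul]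
    ring_nf

/-- The reflection `σ_α` in the hyperplane orthogonal to `α`:
`σ_α (v) = v - 2 (⟪α, v⟫ / ⟪α, α⟫) • α`. -/
noncomputable def rootReflectionEquiv (α : V) (hα : ⟪α, α⟫ ≠ 0) : V ≃ₗᵢ[ℝ] V :=
  (LinearEquiv.ofInvolutive (rootReflectionLinearMap α)
    (rootReflection_involutive hα)).isometryOfInner (inner_rootReflection_rootReflection hα)

theorem inner_mul_apply_eq_neg_of_apply_eq_neg {w σ : V ≃ₗᵢ[ℝ] V} {α : V} (hσα : σ α = -α)
    (x : V) : ⟪(w * σ) α, x⟫ = -⟪w α, x⟫ := by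
  rw [LinearIsometryEquiv.coe_mul, Function.comp_apply, hσα, map_neg, inner_neg_left]

theorem iUnion_slab_image_eq_iUnion_slab_image_union {W : Subgroup (V ≃ₗᵢ[ℝ] V)}
    {σ : V ≃ₗᵢ[ℝ] V} (hσW : σ ∈ W) {α : V} (hσα : σ α = -α) {C : Set V}
    (hC : ∀ x ∈ C, 0 ≤ ⟪α, x⟫) (ε : ℝ) :
    (⋃ w ∈ W, {x : V | x ∈ w '' C ∧ 0 ≤ ⟪w α, x⟫ ∧ ⟪w α, x⟫ ≤ ε}) =
      ⋃ w ∈ W, {x : V | x ∈ w '' (C ∪ σ '' C) ∧ -ε ≤ ⟪w α, x⟫ ∧ ⟪w α, x⟫ ≤ ε} := by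
  ext x
  simp only [Set.mem_iUnion, Set.mem_ofPred_eq]
  constructor
  · rintro ⟨w, hw, ⟨y, hy, rfl⟩, h0, hε⟩
    exact ⟨w, hw, ⟨y, Or.inl hy, rfl⟩, by linarith, hε⟩
  · rintro ⟨w, hw, ⟨y, hy | ⟨z, hz, rfl⟩, rfl⟩, hε', hε⟩
    · exact ⟨w, hw, ⟨y, hy, rfl⟩, by rw [LinearIsometryEquiv.inner_map_map]; exact hC y hy, hε⟩
    · have hwσ : ⟪(w * σ) α, w (σ z)⟫ = ⟪α, z⟫ := by
        rw [LinearIsometryEquiv.coe_mul, Function.comp_apply, LinearIsometryEquiv.inner_map_map,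
          LinearIsometryEquiv.inner_map_map]
      have hneg := inner_mul_apply_eq_neg_of_apply_eq_neg (w := w) hσα (w (σ z))
      exact ⟨w * σ, mul_mem hw hσW, ⟨z, hz, rfl⟩, hwσ ▸ hC z hz, by linarith⟩

end RootReflection

theorem union_chambers_eq_union_doubled_chambers_general {V : Type*} [NormedAddCommGroup V]
    [InnerProductSpace ℝ V] {n : ℕ}
    (R : Finset V) (hR0 : (0 : V) ∉ R)
    (s : Module.Basis (Fin n) ℝ V) (hsR : ∀ j, s j ∈ R)
    (W : Subgroup (V ≃ₗᵢ[ℝ] V))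
    (hW : W = Subgroup.closure {g : V ≃ₗᵢ[ℝ] V | ∃ α ∈ R, ∀ v, g v = rootReflection α v})
    (C : Set V) (hC : C = {x : V | ∀ j, 0 ≤ ⟪s j, x⟫})
    (i : Fin n) :
    ∀ ε : ℝ, 0 < ε →
      (⋃ w ∈ W, {x : V | x ∈ (w : V ≃ₗᵢ[ℝ] V) '' C ∧
          0 ≤ ⟪(w : V ≃ₗᵢ[ℝ] V) (s i), x⟫ ∧ ⟪(w : V ≃ₗᵢ[ℝ] V) (s i), x⟫ ≤ ε}) =
      ⋃ w ∈ W, {x : V | x ∈ (w : V ≃ₗᵢ[ℝ] V) '' (C ∪ rootReflection (s i) '' C) ∧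
          -ε ≤ ⟪(w : V ≃ₗᵢ[ℝ] V) (s i), x⟫ ∧ ⟪(w : V ≃ₗᵢ[ℝ] V) (s i), x⟫ ≤ ε} := by
  intro ε _
  have hα : ⟪s i, s i⟫ ≠ 0 := inner_self_ne_zero.2 (ne_of_mem_of_not_mem (hsR i) hR0)
  have hσW : rootReflectionEquiv (s i) hα ∈ W :=
    hW ▸ Subgroup.subset_closure ⟨s i, hsR i, fun _ => rfl⟩
  exact iUnion_slab_image_eq_iUnion_slab_image_union hσW (rootReflection_self hα)
    (fun x hx => by rw [hC] at hx; exact hx i) ε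

/-- Let `R` be a reduced root system in `V` whose simple system
`s : Fin n → V` is a basis of `V`, with reflection group `W` and closed Weyl chamber
`C̄`.  Then for every simple root `s i` and every `ε > 0`,
`⋃_{w ∈ W} {x ∈ w C̄ : 0 ≤ ⟪w (s i), x⟫ ≤ ε}
  = ⋃_{w ∈ W} {x ∈ w (C̄ ∪ σ_{s i} C̄) : -ε ≤ ⟪w (s i), x⟫ ≤ ε}`. -/
theorem union_chambers_eq_union_doubled_chambers {V : Type*} [NormedAddCommGroup V]
    [InnerProductSpace ℝ V] {n : ℕ}
    (R : Finset V) (hR0 : (0 : V) ∉ R)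
    (hRrefl : ∀ α ∈ R, rootReflection α '' (R : Set V) = (R : Set V))
    (hRred : ∀ α ∈ R, {x : V | ∃ c : ℝ, x = c • α} ∩ (R : Set V) = {α, -α})
    (s : Module.Basis (Fin n) ℝ V) (hsR : ∀ j, s j ∈ R)
    (hsimple : ∀ α ∈ R, (∀ j, 0 ≤ s.repr α j) ∨ (∀ j, s.repr α j ≤ 0))
    (W : Subgroup (V ≃ₗᵢ[ℝ] V))
    (hW : W = Subgroup.closure {g : V ≃ₗᵢ[ℝ] V | ∃ α ∈ R, ∀ v, g v = rootReflection α v})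
    (C : Set V) (hC : C = {x : V | ∀ j, 0 ≤ ⟪s j, x⟫})
    (i : Fin n) :
    ∀ ε : ℝ, 0 < ε →
      (⋃ w ∈ W, {x : V | x ∈ (w : V ≃ₗᵢ[ℝ] V) '' C ∧
          0 ≤ ⟪(w : V ≃ₗᵢ[ℝ] V) (s i), x⟫ ∧ ⟪(w : V ≃ₗᵢ[ℝ] V) (s i), x⟫ ≤ ε}) =
      ⋃ w ∈ W, {x : V | x ∈ (w : V ≃ₗᵢ[ℝ] V) '' (C ∪ rootReflection (s i) '' C) ∧
          -ε ≤ ⟪(w : V ≃ₗᵢ[ℝ] V) (s i), x⟫ ∧ ⟪(w : V ≃ₗᵢ[ℝ] V) (s i), x⟫ ≤ ε} :=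
  union_chambers_eq_union_doubled_chambers_general R hR0 s hsR W hW C hC i
end

section
/- Let (s_1, …, s_n) be a basis of an n-dimensional real inner product space V satisfying ⟨s_i, s_j⟩ ≤ 0 for all i ≠ j, and let (ξ_1, …, ξ_n) be its dual basis, characterized by ⟨ξ_i, s_j⟩ = δ_{ij}. Then ⟨ξ_i, ξ_j⟩ ≥ 0 for all i ≠ j. -/
/-!
Expand `ξ j = ∑ k, c k • s k` in the basis; pairing with `ξ i` shows `⟪ξ i, ξ j⟫ = c i`, so it
suffices that all `c k ≥ 0`. Since `⟪ξ j, s l⟫ ≥ 0` for every `l`, this is the general fact that a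
vector having nonnegative inner product with every member of an obtuse linearly independent family
has nonnegative coefficients: split `x = p - q` along the positive and negative parts of its
coefficients; then `⟪p, q⟫ ≤ 0` by obtuseness and `⟪x, q⟫ ≥ 0`, so `‖q‖² = ⟪p, q⟫ - ⟪x, q⟫ ≤ 0`,
whence `q = 0` and the negative parts vanish by linear independence.
-/

open scoped RealInnerProductSpace

theorem posPart_mul_negPart {α : Type*} [Ring α] [LinearOrder α] [AddLeftMono α] (x : α) :
    x⁺ * x⁻ = 0 := by
  rcases le_total 0 x with hx | hx
  · simp [negPart_eq_zero.mpr hx]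
  · simp [posPart_eq_zero.mpr hx]

section ObtuseFamily

variable {V : Type*} [NormedAddCommGroup V] [InnerProductSpace ℝ V] {ι : Type*} [Fintype ι]
  {s : ι → V}

theorem inner_sum_smul_sum_smul_nonpos (hs : Pairwise fun k l => ⟪s k, s l⟫ ≤ 0)
    {a b : ι → ℝ} (ha : 0 ≤ a) (hb : 0 ≤ b) (hab : ∀ k, a k * b k = 0) :
    ⟪∑ k, a k • s k, ∑ l, b l • s l⟫ ≤ 0 := by
  rw [sum_inner]
  refine Finset.sum_nonpos fun k _ => ?_
  rw [inner_sum]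
  refine Finset.sum_nonpos fun l _ => ?_
  rw [real_inner_smul_left, real_inner_smul_right, ← mul_assoc]
  obtain rfl | hkl := eq_or_ne k l
  · simp [hab]
  · exact mul_nonpos_of_nonneg_of_nonpos (mul_nonneg (ha k) (hb l)) (hs hkl)

theorem LinearIndependent.nonneg_of_inner_sum_smul_nonneg (hli : LinearIndependent ℝ s)
    (hs : Pairwise fun k l => ⟪s k, s l⟫ ≤ 0) {c : ι → ℝ}
    (hc : ∀ l, 0 ≤ ⟪∑ k, c k • s k, s l⟫) : 0 ≤ c := by
  set p := ∑ k, c⁺ k • s k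
  set q := ∑ k, c⁻ k • s k
  have hx : ∑ k, c k • s k = p - q := by
    rw [← Finset.sum_sub_distrib]
    congr with k
    rw [← sub_smul, ← Pi.sub_apply, posPart_sub_negPart]
  have hpq : ⟪p, q⟫ ≤ 0 := inner_sum_smul_sum_smul_nonpos hs (posPart_nonneg c)
    (negPart_nonneg c) fun k => posPart_mul_negPart (c k)
  have hxq : 0 ≤ ⟪p - q, q⟫ := by
    rw [← hx, inner_sum]
    refine Finset.sum_nonneg fun l _ => ?_
    rw [real_inner_smul_right]
    exact mul_nonneg (negPart_nonneg (c l)) (hc l)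
  have hq : q = 0 := by
    rw [inner_sub_left] at hxq
    exact real_inner_self_nonpos.mp (by linarith)
  exact fun k => negPart_eq_zero.mp (Fintype.linearIndependent_iff.mp hli _ hq k)

end ObtuseFamily

/-- If `(s 1, …, s n)` is a basis of an `n`-dimensional real inner
product space `V` with `⟪s i, s j⟫ ≤ 0` for `i ≠ j`, and `(ξ 1, …, ξ n)` is its dual
basis (characterized by `⟪ξ i, s j⟫ = δ i j`), then `⟪ξ i, ξ j⟫ ≥ 0` for all `i ≠ j`. -/
theorem dual_basis_inner_nonneg {V : Type*} [NormedAddCommGroup V]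
    [InnerProductSpace ℝ V] {n : ℕ}
    (s : Module.Basis (Fin n) ℝ V)
    (hs : ∀ i j, i ≠ j → ⟪s i, s j⟫ ≤ 0)
    (ξ : Fin n → V)
    (hξ : ∀ i j, ⟪ξ i, s j⟫ = if i = j then (1 : ℝ) else 0) :
    ∀ i j, i ≠ j → 0 ≤ ⟪ξ i, ξ j⟫ := by
  intro i j _
  have hcoord : ⟪ξ i, ξ j⟫ = s.repr (ξ j) i := calc
    ⟪ξ i, ξ j⟫ = ⟪ξ i, ∑ k, s.repr (ξ j) k • s k⟫ := by rw [s.sum_repr]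
    _ = s.repr (ξ j) i := by
      simp only [inner_sum, real_inner_smul_right, hξ, mul_ite, mul_one, mul_zero,
        Finset.sum_ite_eq, Finset.mem_univ, if_true]
  have hcoeff : 0 ≤ s.repr (ξ j) := s.linearIndependent.nonneg_of_inner_sum_smul_nonneg hs
    fun l => by rw [s.sum_repr, hξ]; split_ifs <;> norm_num
  rw [hcoord]
  exact hcoeff i
end

section
/- Let (s_1, …, s_n) be a basis of an n-dimensional real inner product space V satisfying ⟨s_i, s_j⟩ ≤ 0 for all i ≠ j, and let (ξ_1, …, ξ_n) be its dual basis, characterized by ⟨ξ_i, s_j⟩ = δ_{ij}. Then for each i one has the expansion ξ_i = Σ_{j=1}^n ⟨ξ_i, ξ_j⟩ s_j, and all the coefficients ⟨ξ_i, ξ_j⟩ in this expansion are nonnegative; in particular every dual basis vector ξ_i lies in the closed convex cone generated by {s_1, …, s_n}. -/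
open scoped RealInnerProductSpace

/-!
The coordinates of `ξ i` in the basis `s` are `⟪ξ j, ξ i⟫`. For their sign, split any `v` with
`⟪v, s j⟫ ≥ 0` for all `j` and coordinates `c` as `v = x⁺ - x⁻` with `x^± = ∑ (c j)^± • s j`.
Since the two sums have disjoint supports and the basis is obtuse, `⟪x⁺, x⁻⟫ ≤ 0`, while
`⟪v, x⁻⟫ ≥ 0`; hence `‖x⁻‖² = ⟪x⁺, x⁻⟫ - ⟪v, x⁻⟫ ≤ 0`, so `x⁻ = 0` and all coordinates of `v`
are nonnegative.
-/

section

variable {V : Type*} [NormedAddCommGroup V] [InnerProductSpace ℝ V] {ι : Type*} [Fintype ι]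

lemma posPart_mul_negPart_eq_zero (a : ℝ) : a⁺ * a⁻ = 0 := by
  rcases le_total a 0 with h | h
  · rw [posPart_eq_zero.2 h, zero_mul]
  · rw [negPart_eq_zero.2 h, mul_zero]

lemma inner_sum_posPart_smul_sum_negPart_smul_nonpos {s : ι → V}
    (hs : Pairwise fun i j => ⟪s i, s j⟫ ≤ 0) (c : ι → ℝ) :
    ⟪∑ i, (c i)⁺ • s i, ∑ j, (c j)⁻ • s j⟫ ≤ 0 := by
  simp only [sum_inner, inner_sum, real_inner_smul_left, real_inner_smul_right]
  refine Finset.sum_nonpos fun i _ => Finset.sum_nonpos fun j _ => ?_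
  obtain rfl | hij := eq_or_ne i j
  · rw [mul_left_comm, ← mul_assoc, posPart_mul_negPart_eq_zero, zero_mul]
  · exact mul_nonpos_of_nonneg_of_nonpos (negPart_nonneg _)
      (mul_nonpos_of_nonneg_of_nonpos (posPart_nonneg _) (hs hij.symm))

lemma Module.Basis.repr_nonneg_of_inner_nonneg (s : Module.Basis ι ℝ V)
    (hs : Pairwise fun i j => ⟪s i, s j⟫ ≤ 0) {v : V} (hv : ∀ i, 0 ≤ ⟪v, s i⟫) (i : ι) :
    0 ≤ s.repr v i := by
  set c := s.repr v
  set xp := ∑ j, (c j)⁺ • s j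
  set xn := ∑ j, (c j)⁻ • s j
  have hv_eq : v = xp - xn := by
    simp only [xp, xn, ← Finset.sum_sub_distrib, ← sub_smul, posPart_sub_negPart]
    exact (s.sum_repr v).symm
  have hv_xn : 0 ≤ ⟪v, xn⟫ := by
    rw [inner_sum]
    exact Finset.sum_nonneg fun j _ =>
      by rw [real_inner_smul_right]; exact mul_nonneg (negPart_nonneg _) (hv j)
  have hxn : xn = 0 := by
    refine inner_self_eq_zero.1 (le_antisymm ?_ real_inner_self_nonneg)
    calc ⟪xn, xn⟫ = ⟪xp, xn⟫ - ⟪v, xn⟫ := by rw [hv_eq, inner_sub_left, sub_sub_cancel]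
      _ ≤ 0 := by linarith [inner_sum_posPart_smul_sum_negPart_smul_nonpos hs c]
  have hc : (fun j => (c j)⁻) = 0 := by
    rw [← s.repr_sum_self fun j => (c j)⁻]
    change ⇑(s.repr xn) = 0
    rw [hxn, map_zero, Finsupp.coe_zero]
  exact negPart_eq_zero.1 (congr_fun hc i)

lemma Module.Basis.inner_eq_repr_of_inner_eq_ite [DecidableEq ι] (s : Module.Basis ι ℝ V)
    {ξ : ι → V} (hξ : ∀ i j, ⟪ξ i, s j⟫ = if i = j then (1 : ℝ) else 0) (i : ι) (v : V) :
    ⟪ξ i, v⟫ = s.repr v i := by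
  conv_lhs => rw [← s.sum_repr v]
  simp only [inner_sum, real_inner_smul_right, hξ, mul_ite, mul_one, mul_zero,
    Finset.sum_ite_eq, Finset.mem_univ, if_true]

end

/-- If `(s 1, …, s n)` is a basis of an `n`-dimensional real inner
product space `V` with `⟪s i, s j⟫ ≤ 0` for `i ≠ j`, and `(ξ 1, …, ξ n)` is its dual
basis (characterized by `⟪ξ i, s j⟫ = δ i j`), then each `ξ i` expands as
`ξ i = ∑ j, ⟪ξ i, ξ j⟫ • s j` with all coefficients `⟪ξ i, ξ j⟫` nonnegative; in
particular each `ξ i` lies in the closed convex cone generated by the `s j`, i.e. it is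
a linear combination of the `s j` with nonnegative coefficients. -/
theorem dual_basis_mem_cone {V : Type*} [NormedAddCommGroup V]
    [InnerProductSpace ℝ V] {n : ℕ}
    (s : Module.Basis (Fin n) ℝ V)
    (hs : ∀ i j, i ≠ j → ⟪s i, s j⟫ ≤ 0)
    (ξ : Fin n → V)
    (hξ : ∀ i j, ⟪ξ i, s j⟫ = if i = j then (1 : ℝ) else 0) :
    (∀ i, ξ i = ∑ j, ⟪ξ i, ξ j⟫ • s j) ∧
    (∀ i j, 0 ≤ ⟪ξ i, ξ j⟫) ∧
    (∀ i, ∃ c : Fin n → ℝ, (∀ j, 0 ≤ c j) ∧ ξ i = ∑ j, c j • s j) := by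
  have hrepr (i j : Fin n) : s.repr (ξ i) j = ⟪ξ i, ξ j⟫ := by
    rw [← s.inner_eq_repr_of_inner_eq_ite hξ, real_inner_comm]
  have hexpand (i : Fin n) : ξ i = ∑ j, ⟪ξ i, ξ j⟫ • s j := by
    simpa only [hrepr] using (s.sum_repr (ξ i)).symm
  have hnonneg (i j : Fin n) : 0 ≤ ⟪ξ i, ξ j⟫ := by
    rw [← hrepr]
    refine s.repr_nonneg_of_inner_nonneg (fun _ _ => hs _ _) (fun k => ?_) j
    rw [hξ]
    split_ifs <;> norm_num
  exact ⟨hexpand, hnonneg, fun i => ⟨_, hnonneg i, hexpand i⟩⟩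
end
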